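/- arXiv:1912.00097 — 2 statements merged into one kernel-verified Lean document; each statement's English description precedes it below -/
import Mathlib

section
/- Let $s\in(0,1)$, $\xi_0>0$, and let $U:\mathbb{R}\to\mathbb{R}$ be bounded, nonnegative, with $U=0$ on $[\xi_0,\infty)$ and $U\ge c>0$ on $(-\infty,0]$. Define $G(\xi) := \int_{\xi}^{\infty}\frac{1}{\eta}\Big(\int_{-\infty}^{\xi_0}\frac{U(y)}{(\eta-y)^{1+2s}}\,dy\Big)d\eta$ for $\xi>\xi_0$. Then there exist constants $0<C_1\le C_2$ and $R>\xi_0$ such that $C_1\xi^{-2s}\le G(\xi)\le C_2\xi^{-2s}$ for all $\xi\ge R$. -/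
open MeasureTheory Set

lemma aux_indicator_key (g : ℝ → ℝ) (η a : ℝ) (y : ℝ) :
    (Iic a).indicator (fun y => g (η - y)) y = (Ici (η - a)).indicator g (η - y) := by
  simp only [indicator_apply, mem_Iic, mem_Ici]
  by_cases h : y ≤ a
  · rw [if_pos h, if_pos (by linarith)]
  · rw [if_neg h, if_neg (by intro hh; exact h (by linarith))]

/-- Substitution `t = η - y` in an integral over `Iic a`. -/
lemma aux_integral_Iic_comp_sub (g : ℝ → ℝ) (η a : ℝ) :
    ∫ y in Iic a, g (η - y) = ∫ t in Ici (η - a), g t := by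
  rw [← integral_indicator measurableSet_Iic, ← integral_indicator measurableSet_Ici]
  simp_rw [aux_indicator_key g η a]
  exact integral_sub_left_eq_self ((Ici (η - a)).indicator g) volume η

lemma aux_integrableOn_Iic_comp_sub {g : ℝ → ℝ} {η a : ℝ}
    (h : IntegrableOn g (Ici (η - a))) :
    IntegrableOn (fun y => g (η - y)) (Iic a) := by
  rw [← integrable_indicator_iff measurableSet_Iic]
  have := ((integrable_indicator_iff (measurableSet_Ici (a := η - a))).2 h).comp_sub_left η
  exact this.congr (Filter.Eventually.of_forall fun y => (aux_indicator_key g η a y).symm)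

lemma aux_intOn_rpow {s b η : ℝ} (hs : 0 < s) (h : b < η) :
    IntegrableOn (fun y => (η - y) ^ (-(1 + 2 * s))) (Iic b) := by
  apply aux_integrableOn_Iic_comp_sub (g := fun t : ℝ => t ^ (-(1 + 2 * s)))
  rw [integrableOn_Ici_iff_integrableOn_Ioi]
  exact integrableOn_Ioi_rpow_of_lt (by linarith) (by linarith)

lemma aux_int_rpow {s b η : ℝ} (hs : 0 < s) (h : b < η) :
    ∫ y in Iic b, (η - y) ^ (-(1 + 2 * s)) = (η - b) ^ (-(2 * s)) / (2 * s) := by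
  rw [aux_integral_Iic_comp_sub (fun t => t ^ (-(1 + 2 * s))) η b,
    integral_Ici_eq_integral_Ioi,
    integral_Ioi_rpow_of_lt (by linarith) (by linarith : (0:ℝ) < η - b),
    show (-(1 + 2 * s) + 1 : ℝ) = -(2 * s) by ring, neg_div_neg_eq]

/-- Tail behaviour of the selfsimilar enthalpy profile: the double integral
`G(ξ) = ∫_ξ^∞ η⁻¹ (∫_{-∞}^{ξ₀} U(y)(η-y)^{-1-2s} dy) dη` satisfies
`G(ξ) ≍ ξ^{-2s}` for large `ξ`. -/
theorem tail_double_integral_asymp (s ξ0 c : ℝ) (hs : s ∈ Set.Ioo (0 : ℝ) 1)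
    (hξ0 : 0 < ξ0) (hc : 0 < c)
    (U : ℝ → ℝ) (hmeas : Measurable U)
    (hbd : ∃ M : ℝ, ∀ ξ, U ξ ≤ M) (hnn : ∀ ξ, 0 ≤ U ξ)
    (hzero : ∀ ξ, ξ0 ≤ ξ → U ξ = 0)
    (hlb : ∀ ξ, ξ ≤ 0 → c ≤ U ξ) :
    ∃ C1 C2 R : ℝ, 0 < C1 ∧ C1 ≤ C2 ∧ ξ0 < R ∧
      ∀ ξ, R ≤ ξ →
        C1 * ξ ^ (-(2 * s)) ≤
          (∫ η in Set.Ioi ξ, (∫ y in Set.Iic ξ0, U y / (η - y) ^ (1 + 2 * s)) / η) ∧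
        (∫ η in Set.Ioi ξ, (∫ y in Set.Iic ξ0, U y / (η - y) ^ (1 + 2 * s)) / η) ≤
          C2 * ξ ^ (-(2 * s)) := by
  obtain ⟨M, hM⟩ := hbd
  have hs0 : 0 < s := hs.1
  have hMc : c ≤ M := le_trans (hlb 0 le_rfl) (hM 0)
  have hM0 : 0 < M := lt_of_lt_of_le hc hMc
  have h2s : (1:ℝ) ≤ (2:ℝ) ^ (2 * s) :=
    Real.one_le_rpow (by norm_num) (by positivity)
  -- rewriting of the integrand
  have hrw : ∀ η : ℝ, ∀ y : ℝ, y < η →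
      U y / (η - y) ^ (1 + 2 * s) = U y * (η - y) ^ (-(1 + 2 * s)) := by
    intro η y hy
    rw [Real.rpow_neg (by linarith), div_eq_mul_inv]
  -- nonnegativity of the inner integrand everywhere
  have hnn' : ∀ η : ℝ, ξ0 < η → ∀ y : ℝ, 0 ≤ U y / (η - y) ^ (1 + 2 * s) := by
    intro η hη y
    by_cases hy : y < η
    · rw [hrw η y hy]
      exact mul_nonneg (hnn y) (Real.rpow_nonneg (by linarith) _)
    · rw [hzero y (by push_neg at hy; linarith), zero_div]
  -- integrability of the inner integrand
  have hInt : ∀ η : ℝ, ξ0 < η →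
      IntegrableOn (fun y => U y / (η - y) ^ (1 + 2 * s)) (Iic ξ0) := by
    intro η hη
    have hg : IntegrableOn (fun y => M * (η - y) ^ (-(1 + 2 * s))) (Iic ξ0) :=
      (aux_intOn_rpow hs0 hη).const_mul M
    refine Integrable.mono' hg ?_ ?_
    · exact ((hmeas.div ((measurable_const.sub measurable_id).pow
        measurable_const)).aestronglyMeasurable)
    · rw [ae_restrict_iff' measurableSet_Iic]
      filter_upwards with y hy
      have hyη : y < η := lt_of_le_of_lt hy hη
      rw [hrw η y hyη, Real.norm_of_nonneg
        (mul_nonneg (hnn y) (Real.rpow_nonneg (by linarith) _))]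
      exact mul_le_mul_of_nonneg_right (hM y) (Real.rpow_nonneg (by linarith) _)
  -- inner upper bound
  have hup : ∀ η : ℝ, ξ0 < η →
      (∫ y in Iic ξ0, U y / (η - y) ^ (1 + 2 * s))
        ≤ M * ((η - ξ0) ^ (-(2 * s)) / (2 * s)) := by
    intro η hη
    calc (∫ y in Iic ξ0, U y / (η - y) ^ (1 + 2 * s))
        ≤ ∫ y in Iic ξ0, M * (η - y) ^ (-(1 + 2 * s)) := by
          refine setIntegral_mono_on (hInt η hη)
            ((aux_intOn_rpow hs0 hη).const_mul M) measurableSet_Iic ?_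
          intro y hy
          rw [hrw η y (lt_of_le_of_lt hy hη)]
          exact mul_le_mul_of_nonneg_right (hM y) (Real.rpow_nonneg (by simp at hy; linarith) _)
      _ = M * ((η - ξ0) ^ (-(2 * s)) / (2 * s)) := by
          rw [integral_const_mul, aux_int_rpow hs0 hη]
  -- inner lower bound
  have hlow : ∀ η : ℝ, ξ0 < η →
      c * (η ^ (-(2 * s)) / (2 * s))
        ≤ ∫ y in Iic ξ0, U y / (η - y) ^ (1 + 2 * s) := by
    intro η hη
    have hη0 : (0:ℝ) < η := lt_trans hξ0 hη
    calc c * (η ^ (-(2 * s)) / (2 * s))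
        = ∫ y in Iic (0:ℝ), c * (η - y) ^ (-(1 + 2 * s)) := by
          rw [integral_const_mul, aux_int_rpow hs0 hη0, sub_zero]
      _ ≤ ∫ y in Iic (0:ℝ), U y / (η - y) ^ (1 + 2 * s) := by
          refine setIntegral_mono_on ((aux_intOn_rpow hs0 hη0).const_mul c)
            ((hInt η hη).mono_set (Iic_subset_Iic.2 hξ0.le)) measurableSet_Iic ?_
          intro y hy
          simp only [mem_Iic] at hy
          rw [hrw η y (by linarith)]
          exact mul_le_mul_of_nonneg_right (hlb y hy) (Real.rpow_nonneg (by linarith) _)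
      _ ≤ ∫ y in Iic ξ0, U y / (η - y) ^ (1 + 2 * s) := by
          refine setIntegral_mono_set (hInt η hη)
            (Filter.Eventually.of_forall fun y => hnn' η hη y)
            (HasSubset.Subset.eventuallyLE (Iic_subset_Iic.2 hξ0.le))
  -- measurability of the outer integrand
  have houter_meas : AEStronglyMeasurable
      (fun η => (∫ y in Iic ξ0, U y / (η - y) ^ (1 + 2 * s)) / η) volume := by
    have h1 : StronglyMeasurable
        (fun η => ∫ y in Iic ξ0, U y / (η - y) ^ (1 + 2 * s)) := by
      apply MeasureTheory.StronglyMeasurable.integral_prod_right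
        (f := fun η y => U y / (η - y) ^ (1 + 2 * s))
      exact ((hmeas.comp measurable_snd).div
        ((measurable_fst.sub measurable_snd).pow measurable_const)).stronglyMeasurable
    exact (h1.measurable.div measurable_id).aestronglyMeasurable
  refine ⟨c / (2 * s) / (2 * s), M * 2 ^ (2 * s) / (2 * s) / (2 * s), 2 * ξ0,
    by positivity, ?_, by linarith, ?_⟩
  · gcongr
    nlinarith
  intro ξ hξ
  have hξpos : (0:ℝ) < ξ := by linarith
  have hξ1 : ξ0 < ξ := by linarith
  -- pointwise bounds for the outer integrand on `Ioi ξ`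
  have hsplit : ∀ η : ℝ, 0 < η → η ^ (-(1 + 2 * s)) = η ^ (-(2 * s)) * η⁻¹ := by
    intro η hη
    rw [show (-(1 + 2 * s) : ℝ) = -(2 * s) + (-1) by ring, Real.rpow_add hη,
      Real.rpow_neg_one]
  have hptup : ∀ η ∈ Ioi ξ,
      (∫ y in Iic ξ0, U y / (η - y) ^ (1 + 2 * s)) / η
        ≤ (M * 2 ^ (2 * s) / (2 * s)) * η ^ (-(1 + 2 * s)) := by
    intro η hη
    simp only [mem_Ioi] at hη
    have hη0 : (0:ℝ) < η := by linarith
    have hηξ0 : ξ0 < η := by linarith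
    have hhalf : η / 2 ≤ η - ξ0 := by linarith
    have hkey : (η - ξ0) ^ (-(2 * s)) ≤ 2 ^ (2 * s) * η ^ (-(2 * s)) := by
      calc (η - ξ0) ^ (-(2 * s)) ≤ (η / 2) ^ (-(2 * s)) :=
            Real.rpow_le_rpow_of_nonpos (by positivity) hhalf (neg_nonpos.mpr (by positivity))
        _ = 2 ^ (2 * s) * η ^ (-(2 * s)) := by
            rw [Real.div_rpow hη0.le (by norm_num), Real.rpow_neg (by norm_num : (0:ℝ) ≤ 2),
              div_eq_mul_inv, inv_inv, mul_comm]
    calc (∫ y in Iic ξ0, U y / (η - y) ^ (1 + 2 * s)) / η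
        ≤ (M * ((η - ξ0) ^ (-(2 * s)) / (2 * s))) / η := by
          have := hup η hηξ0
          gcongr
      _ ≤ (M * ((2 ^ (2 * s) * η ^ (-(2 * s))) / (2 * s))) / η := by
          gcongr
      _ = (M * 2 ^ (2 * s) / (2 * s)) * η ^ (-(1 + 2 * s)) := by
          rw [hsplit η hη0]
          field_simp
  have hptlow : ∀ η ∈ Ioi ξ,
      (c / (2 * s)) * η ^ (-(1 + 2 * s))
        ≤ (∫ y in Iic ξ0, U y / (η - y) ^ (1 + 2 * s)) / η := by
    intro η hη
    simp only [mem_Ioi] at hη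
    have hη0 : (0:ℝ) < η := by linarith
    have hηξ0 : ξ0 < η := by linarith
    have : (c / (2 * s)) * η ^ (-(1 + 2 * s)) = (c * (η ^ (-(2 * s)) / (2 * s))) / η := by
      rw [hsplit η hη0]; field_simp
    rw [this]
    have := hlow η hηξ0
    gcongr
  -- integrability of the comparison functions
  have hrint : IntegrableOn (fun η => η ^ (-(1 + 2 * s))) (Ioi ξ) :=
    integrableOn_Ioi_rpow_of_lt (by linarith) hξpos
  have hrval : ∫ η in Ioi ξ, η ^ (-(1 + 2 * s)) = ξ ^ (-(2 * s)) / (2 * s) := by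
    rw [integral_Ioi_rpow_of_lt (by linarith) hξpos,
      show (-(1 + 2 * s) + 1 : ℝ) = -(2 * s) by ring, neg_div_neg_eq]
  -- integrability of the outer integrand
  have houtInt : IntegrableOn
      (fun η => (∫ y in Iic ξ0, U y / (η - y) ^ (1 + 2 * s)) / η) (Ioi ξ) := by
    refine Integrable.mono' (hrint.const_mul (M * 2 ^ (2 * s) / (2 * s)))
      houter_meas.restrict ?_
    rw [ae_restrict_iff' measurableSet_Ioi]
    filter_upwards with η hη
    rw [Real.norm_of_nonneg (div_nonneg
      (setIntegral_nonneg measurableSet_Iic fun y _ => hnn' η (by simp at hη; linarith) y)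
      (by simp at hη; linarith))]
    exact hptup η hη
  constructor
  · calc c / (2 * s) / (2 * s) * ξ ^ (-(2 * s))
        = (c / (2 * s)) * (ξ ^ (-(2 * s)) / (2 * s)) := by ring
      _ = ∫ η in Ioi ξ, (c / (2 * s)) * η ^ (-(1 + 2 * s)) := by
          rw [integral_const_mul, hrval]
      _ ≤ ∫ η in Ioi ξ, (∫ y in Iic ξ0, U y / (η - y) ^ (1 + 2 * s)) / η :=
          setIntegral_mono_on (hrint.const_mul _) houtInt measurableSet_Ioi hptlow
  · calc (∫ η in Ioi ξ, (∫ y in Iic ξ0, U y / (η - y) ^ (1 + 2 * s)) / η)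
        ≤ ∫ η in Ioi ξ, (M * 2 ^ (2 * s) / (2 * s)) * η ^ (-(1 + 2 * s)) :=
          setIntegral_mono_on houtInt (hrint.const_mul _) measurableSet_Ioi hptup
      _ = M * 2 ^ (2 * s) / (2 * s) / (2 * s) * ξ ^ (-(2 * s)) := by
          rw [integral_const_mul, hrval]; ring
end

section
/- Let $s\in(0,1)$ with $s>1/2$, $\xi_0\in\mathbb{R}$, and let $U:\mathbb{R}\to[0,\infty)$ be bounded with $U=0$ on $[\xi_0,\infty)$ and $U(\xi)\le C(\xi_0-\xi)^{s}$ for all $\xi\le\xi_0$ and some constant $C>0$. Let $\eta\in C_c^\infty(\mathbb{R})$ be a cut-off with $|(-\Delta)^s\eta(z)|\le C'(1+|z|)^{-1-2s}$ and set $\eta_\varepsilon(z):=\eta(z/\varepsilon)$. Then $\Big|\int_{-\infty}^{\xi_0} U(\xi)\,(-\Delta)^s[\eta_\varepsilon(\cdot-\xi_0)](\xi)\,d\xi\Big|\le C''\,\varepsilon^{1-s}$ for all $\varepsilon\in(0,1]$, for some constant $C''$ depending only on $C, C', s$. In particular this integral tends to $0$ as $\varepsilon\to0^+$. Moreover the same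 conclusion (with exponent $1-s>0$) holds for all $s\in(0,1)$, since $\int_{-\infty}^{0}\frac{|z|^s}{(1+|z|)^{1+2s}}\,dz<\infty$. -/
open MeasureTheory Filter Set

/-- One-dimensional fractional Laplacian (principal value, normalizing constant `c`). -/
noncomputable def fracLap1 (s c : ℝ) (ψ : ℝ → ℝ) (x : ℝ) : ℝ :=
  limUnder (nhdsWithin (0 : ℝ) (Set.Ioi 0)) fun ε =>
    c * ∫ y in {y : ℝ | ε ≤ |x - y|}, (ψ x - ψ y) / |x - y| ^ (1 + 2 * s)

/-- Symmetrized representation of the truncated integral. -/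
lemma trunc_symm (s : ℝ) (hs : s ∈ Set.Ioo (0 : ℝ) 1) (ψ : ℝ → ℝ)
    (hψc : Continuous ψ) (M : ℝ) (hM : ∀ y, ‖ψ y‖ ≤ M)
    (x : ℝ) {δ : ℝ} (hδ : 0 < δ) :
    (∫ y in {y : ℝ | δ ≤ |x - y|}, (ψ x - ψ y) / |x - y| ^ (1 + 2 * s)) =
      ∫ r in Ici δ, (2 * ψ x - ψ (x + r) - ψ (x - r)) / |r| ^ (1 + 2 * s) := by
  obtain ⟨hs0, hs1⟩ := hs
  set p : ℝ := 1 + 2 * s with hp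
  have hp1 : 1 < p := by simp [hp]; linarith
  -- auxiliary integrability
  have key : ∀ F : ℝ → ℝ, Measurable F → (∀ r, |F r| ≤ 2 * M) →
      IntegrableOn (fun r => F r / |r| ^ p) (Ici δ) := by
    intro F hFm hFb
    rw [integrableOn_Ici_iff_integrableOn_Ioi]
    have hint : IntegrableOn (fun r : ℝ => 2 * M * r ^ (-p)) (Ioi δ) :=
      (integrableOn_Ioi_rpow_of_lt (by linarith) hδ).const_mul _
    refine hint.mono' ?_ ?_
    · exact ((hFm.div ((measurable_abs).pow_const p)).aestronglyMeasurable)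
    · filter_upwards [ae_restrict_mem measurableSet_Ioi] with r hr
      have hr0 : 0 < r := lt_trans hδ hr
      have habs : |r| = r := abs_of_pos hr0
      have hden : (0:ℝ) < r ^ p := Real.rpow_pos_of_pos hr0 _
      rw [Real.norm_eq_abs, abs_div, habs, abs_of_nonneg hden.le, Real.rpow_neg hr0.le,
        ← div_eq_mul_inv]
      exact (div_le_div_iff_of_pos_right hden).mpr (hFb r)
  set hplus : ℝ → ℝ := fun r => (ψ x - ψ (x + r)) / |r| ^ p with hdefp
  set hminus : ℝ → ℝ := fun r => (ψ x - ψ (x - r)) / |r| ^ p with hdefm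
  have hMx : ∀ y, |ψ x - ψ y| ≤ 2 * M := by
    intro y
    calc |ψ x - ψ y| ≤ |ψ x| + |ψ y| := abs_sub _ _
    _ ≤ M + M := add_le_add (hM x) (hM y)
    _ = 2 * M := by ring
  have hIp : IntegrableOn hplus (Ici δ) :=
    key _ (measurable_const.sub (hψc.measurable.comp (measurable_const.add measurable_id)))
      (fun r => hMx _)
  have hIm : IntegrableOn hminus (Ici δ) :=
    key _ (measurable_const.sub (hψc.measurable.comp (measurable_const.sub measurable_id)))
      (fun r => hMx _)
  -- the truncated region splits into two rays
  have hset : {y : ℝ | δ ≤ |x - y|} = Iic (x - δ) ∪ Ici (x + δ) := by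
    ext y
    simp only [mem_setOf_eq, mem_union, mem_Iic, mem_Ici, le_abs]
    constructor
    · rintro (h | h)
      · exact Or.inl (by linarith)
      · exact Or.inr (by linarith)
    · rintro (h | h)
      · exact Or.inl (by linarith)
      · exact Or.inr (by linarith)
  -- indicator identities
  have hindp : (Ici (x + δ)).indicator (fun y => (ψ x - ψ y) / |x - y| ^ p) =
      fun y => (Ici δ).indicator hplus (y - x) := by
    funext y
    by_cases hy : x + δ ≤ y
    · rw [indicator_of_mem (by simpa using hy), indicator_of_mem (by simp [mem_Ici]; linarith)]
      simp only [hdefp]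
      rw [add_sub_cancel, abs_sub_comm]
    · rw [indicator_of_notMem (by simpa using hy),
        indicator_of_notMem (by simp only [mem_Ici, not_le] at hy ⊢; linarith)]
  have hindm : (Iic (x - δ)).indicator (fun y => (ψ x - ψ y) / |x - y| ^ p) =
      fun y => (Ici δ).indicator hminus (x - y) := by
    funext y
    by_cases hy : y ≤ x - δ
    · rw [indicator_of_mem (by simpa using hy), indicator_of_mem (by simp [mem_Ici]; linarith)]
      simp only [hdefm]
      rw [sub_sub_cancel]
    · rw [indicator_of_notMem (by simpa using hy),
        indicator_of_notMem (by simp only [mem_Ici, not_le] at hy ⊢; linarith)]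
  -- integrability on the two rays
  have hipI : Integrable ((Ici δ).indicator hplus) :=
    (integrable_indicator_iff measurableSet_Ici).2 hIp
  have himI : Integrable ((Ici δ).indicator hminus) :=
    (integrable_indicator_iff measurableSet_Ici).2 hIm
  have hIright : IntegrableOn (fun y => (ψ x - ψ y) / |x - y| ^ p) (Ici (x + δ)) := by
    rw [← integrable_indicator_iff measurableSet_Ici, hindp]
    exact hipI.comp_sub_right x
  have hIleft : IntegrableOn (fun y => (ψ x - ψ y) / |x - y| ^ p) (Iic (x - δ)) := by
    rw [← integrable_indicator_iff measurableSet_Iic, hindm]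
    exact himI.comp_sub_left x
  -- compute the two ray integrals
  have hright : (∫ y in Ici (x + δ), (ψ x - ψ y) / |x - y| ^ p) = ∫ r in Ici δ, hplus r := by
    rw [← integral_indicator measurableSet_Ici, hindp,
      integral_sub_right_eq_self ((Ici δ).indicator hplus) x,
      integral_indicator measurableSet_Ici]
  have hleft : (∫ y in Iic (x - δ), (ψ x - ψ y) / |x - y| ^ p) = ∫ r in Ici δ, hminus r := by
    rw [← integral_indicator measurableSet_Iic, hindm,
      integral_sub_left_eq_self ((Ici δ).indicator hminus) volume x,
      integral_indicator measurableSet_Ici]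
  have hdisj : Disjoint (Iic (x - δ)) (Ici (x + δ)) := by
    rw [Iic_disjoint_Ici]
    · linarith
  rw [hset, setIntegral_union hdisj measurableSet_Ici hIleft hIright, hleft, hright,
    ← integral_add hIm hIp]
  refine setIntegral_congr_fun measurableSet_Ici (fun r hr => ?_)
  simp only [hdefp, hdefm]
  rw [← add_div]
  ring_nf

/-- Integrability of the symmetrized integrand for a smooth compactly supported function. -/
lemma symm_integrable (s : ℝ) (hs : s ∈ Set.Ioo (0 : ℝ) 1) (ψ : ℝ → ℝ)
    (hψ : ContDiff ℝ (⊤ : ℕ∞) ψ) (hsupp : HasCompactSupport ψ) (x : ℝ) :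
    IntegrableOn (fun r => (2 * ψ x - ψ (x + r) - ψ (x - r)) / |r| ^ (1 + 2 * s))
      (Ioi (0 : ℝ)) := by
  obtain ⟨hs0, hs1⟩ := hs
  set p : ℝ := 1 + 2 * s with hp
  have hψ' : ContDiff ℝ ((⊤ : ℕ∞) : WithTop ℕ∞) ψ := hψ.of_le (by simp)
  have hψc : Continuous ψ := hψ'.continuous
  obtain ⟨M, hM⟩ := hsupp.exists_bound_of_continuous hψc
  have hdψ : ContDiff ℝ ((⊤ : ℕ∞) : WithTop ℕ∞) (deriv ψ) := (contDiff_infty_iff_deriv.mp hψ').2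
  have hdiff : Differentiable ℝ ψ := (contDiff_infty_iff_deriv.mp hψ').1
  have hddiff : Differentiable ℝ (deriv ψ) := (contDiff_infty_iff_deriv.mp hdψ).1
  obtain ⟨K, hK⟩ := (hsupp.deriv.deriv).exists_bound_of_continuous
    ((contDiff_infty_iff_deriv.mp hdψ).2.continuous)
  have hK0 : 0 ≤ K := le_trans (norm_nonneg _) (hK 0)
  -- Lipschitz bound for deriv ψ
  have hlip : ∀ a b : ℝ, |deriv ψ a - deriv ψ b| ≤ K * |a - b| := by
    intro a b
    have := Convex.norm_image_sub_le_of_norm_deriv_le (f := deriv ψ) (s := univ)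
      (fun y _ => hddiff y) (fun y _ => hK y) convex_univ (mem_univ b) (mem_univ a)
    simpa [Real.norm_eq_abs] using this
  -- Taylor-type bound
  have hT : ∀ r : ℝ, 0 ≤ r → |2 * ψ x - ψ (x + r) - ψ (x - r)| ≤ 2 * K * r ^ 2 := by
    intro r hr
    set g : ℝ → ℝ := fun t => ψ (x + t) + ψ (x - t) - 2 * ψ x with hgdef
    have hg : ∀ t : ℝ, HasDerivAt g (deriv ψ (x + t) - deriv ψ (x - t)) t := by
      intro t
      have h1 : HasDerivAt (fun t : ℝ => ψ (x + t)) (deriv ψ (x + t)) t := by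
        simpa [Function.comp_def] using (hdiff (x + t)).hasDerivAt.comp t ((hasDerivAt_id t).const_add x)
      have h2 : HasDerivAt (fun t : ℝ => ψ (x - t)) (deriv ψ (x - t) * (-1)) t :=
        (hdiff (x - t)).hasDerivAt.comp t ((hasDerivAt_id t).const_sub x)
      have := (h1.add h2).sub_const (2 * ψ x)
      exact this.congr_deriv (by ring)
    have hgd : ∀ t ∈ Icc (0 : ℝ) r, DifferentiableAt ℝ g t := fun t _ => (hg t).differentiableAt
    have hgb : ∀ t ∈ Icc (0 : ℝ) r, ‖deriv g t‖ ≤ 2 * K * r := by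
      intro t ht
      rw [(hg t).deriv, Real.norm_eq_abs]
      calc |deriv ψ (x + t) - deriv ψ (x - t)| ≤ K * |(x + t) - (x - t)| := hlip _ _
      _ = K * |2 * t| := by ring_nf
      _ = K * (2 * t) := by rw [abs_of_nonneg (by linarith [ht.1])]
      _ ≤ 2 * K * r := by nlinarith [ht.1, ht.2]
    have hmain := Convex.norm_image_sub_le_of_norm_deriv_le (f := g) (s := Icc 0 r) hgd hgb
      (convex_Icc 0 r) (left_mem_Icc.mpr hr) (right_mem_Icc.mpr hr)
    have hg0 : g 0 = 0 := by simp [hgdef]; ring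
    have heq : 2 * ψ x - ψ (x + r) - ψ (x - r) = -(g r - g 0) := by
      simp [hgdef]; ring
    rw [heq, abs_neg]
    calc |g r - g 0| ≤ 2 * K * r * ‖r - 0‖ := hmain
    _ = 2 * K * r ^ 2 := by rw [Real.norm_eq_abs, sub_zero, abs_of_nonneg hr]; ring
  -- measurability
  have hGm : Measurable (fun r : ℝ => (2 * ψ x - ψ (x + r) - ψ (x - r)) / |r| ^ p) := by
    apply Measurable.div
    · exact (measurable_const.sub (hψc.measurable.comp (measurable_const.add measurable_id))).sub
        (hψc.measurable.comp (measurable_const.sub measurable_id))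
    · exact measurable_abs.pow_const p
  have hnum : ∀ r : ℝ, |2 * ψ x - ψ (x + r) - ψ (x - r)| ≤ 4 * M := by
    intro r
    have h1 := hM x; have h2 := hM (x + r); have h3 := hM (x - r)
    simp only [Real.norm_eq_abs] at h1 h2 h3
    have habs : |ψ x| ≤ M := h1
    calc |2 * ψ x - ψ (x + r) - ψ (x - r)|
        ≤ |2 * ψ x - ψ (x + r)| + |ψ (x - r)| := abs_sub _ _
      _ ≤ (|2 * ψ x| + |ψ (x + r)|) + |ψ (x - r)| := by gcongr; exact abs_sub _ _
      _ ≤ (2 * M + M) + M := by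
          have h2M : |2 * ψ x| ≤ 2 * M := by
            rw [abs_mul]
            calc |(2:ℝ)| * |ψ x| = 2 * |ψ x| := by norm_num
              _ ≤ 2 * M := by linarith
          gcongr
      _ = 4 * M := by ring
  rw [show Ioi (0:ℝ) = Ioc 0 1 ∪ Ioi 1 from (Ioc_union_Ioi_eq_Ioi zero_le_one).symm]
  apply IntegrableOn.union
  · -- near zero
    have hint : IntegrableOn (fun r : ℝ => 2 * K * r ^ (1 - 2 * s)) (Ioc (0:ℝ) 1) := by
      have := intervalIntegral.intervalIntegrable_rpow' (a := (0:ℝ)) (b := 1)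
        (r := 1 - 2 * s) (by linarith)
      exact ((intervalIntegrable_iff_integrableOn_Ioc_of_le zero_le_one).mp this).const_mul _
    refine hint.mono' hGm.aestronglyMeasurable ?_
    filter_upwards [ae_restrict_mem measurableSet_Ioc] with r hr
    have hr0 : 0 < r := hr.1
    have habs : |r| = r := abs_of_pos hr0
    have hden : (0:ℝ) < r ^ p := Real.rpow_pos_of_pos hr0 _
    rw [Real.norm_eq_abs, abs_div, habs, abs_of_nonneg hden.le]
    have step1 : |2 * ψ x - ψ (x + r) - ψ (x - r)| / r ^ p ≤ (2 * K * r ^ 2) / r ^ p :=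
      (div_le_div_iff_of_pos_right hden).mpr (hT r hr0.le)
    refine step1.trans (le_of_eq ?_)
    rw [mul_div_assoc]
    congr 1
    rw [← Real.rpow_natCast r 2, ← Real.rpow_sub hr0]
    norm_num [hp]
    ring_nf
  · -- away from zero
    have hint : IntegrableOn (fun r : ℝ => 4 * M * r ^ (-p)) (Ioi (1:ℝ)) :=
      (integrableOn_Ioi_rpow_of_lt (by simp [hp]; linarith) one_pos).const_mul _
    refine hint.mono' hGm.aestronglyMeasurable ?_
    filter_upwards [ae_restrict_mem measurableSet_Ioi] with r hr
    have hr0 : 0 < r := lt_trans one_pos hr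
    have habs : |r| = r := abs_of_pos hr0
    have hden : (0:ℝ) < r ^ p := Real.rpow_pos_of_pos hr0 _
    rw [Real.norm_eq_abs, abs_div, habs, abs_of_nonneg hden.le, Real.rpow_neg hr0.le,
      ← div_eq_mul_inv]
    exact (div_le_div_iff_of_pos_right hden).mpr (hnum r)

/-- Representation of the fractional Laplacian of a smooth compactly supported function. -/
lemma fracLap1_eq (s c : ℝ) (hs : s ∈ Set.Ioo (0 : ℝ) 1) (ψ : ℝ → ℝ)
    (hψ : ContDiff ℝ (⊤ : ℕ∞) ψ) (hsupp : HasCompactSupport ψ) (x : ℝ) :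
    fracLap1 s c ψ x =
      c * ∫ r in Ioi (0:ℝ), (2 * ψ x - ψ (x + r) - ψ (x - r)) / |r| ^ (1 + 2 * s) := by
  set p : ℝ := 1 + 2 * s with hp
  set G : ℝ → ℝ := fun r => (2 * ψ x - ψ (x + r) - ψ (x - r)) / |r| ^ p with hGdef
  have hψc : Continuous ψ := (hψ.of_le (by simp) : ContDiff ℝ ((⊤:ℕ∞) : WithTop ℕ∞) ψ).continuous
  obtain ⟨M, hM⟩ := hsupp.exists_bound_of_continuous hψc
  have hGint : IntegrableOn G (Ioi (0:ℝ)) := symm_integrable s hs ψ hψ hsupp x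
  have hGm : Measurable G := by
    apply Measurable.div
    · exact (measurable_const.sub (hψc.measurable.comp (measurable_const.add measurable_id))).sub
        (hψc.measurable.comp (measurable_const.sub measurable_id))
    · exact measurable_abs.pow_const p
  -- dominated convergence
  have hTend : Tendsto (fun δ : ℝ => ∫ r, (Ici δ).indicator G r ∂(volume.restrict (Ioi 0)))
      (nhdsWithin (0:ℝ) (Ioi 0)) (nhds (∫ r in Ioi (0:ℝ), G r)) := by
    apply tendsto_integral_filter_of_dominated_convergence (fun r => |G r|)
    · exact Eventually.of_forall fun δ =>
        (hGm.indicator measurableSet_Ici).aestronglyMeasurable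
    · exact Eventually.of_forall fun δ => Eventually.of_forall fun r => by
        simpa [Real.norm_eq_abs] using norm_indicator_le_norm_self G r (s := Ici δ)
    · exact hGint.abs
    · filter_upwards [ae_restrict_mem measurableSet_Ioi] with r hr
      apply Tendsto.congr' (f₁ := fun _ => G r)
      · filter_upwards [Ioo_mem_nhdsGT_of_mem (Set.left_mem_Ico.mpr hr : (0:ℝ) ∈ Ico 0 r)]
          with δ hδ
        exact (indicator_of_mem (mem_Ici.mpr hδ.2.le) G).symm
      · exact tendsto_const_nhds
  have hTend2 : Tendsto
      (fun δ : ℝ => c * ∫ y in {y : ℝ | δ ≤ |x - y|}, (ψ x - ψ y) / |x - y| ^ (1 + 2 * s))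
      (nhdsWithin (0:ℝ) (Ioi 0)) (nhds (c * ∫ r in Ioi (0:ℝ), G r)) := by
    apply Tendsto.congr' (f₁ := fun δ => c * ∫ r, (Ici δ).indicator G r ∂(volume.restrict (Ioi 0)))
    · filter_upwards [self_mem_nhdsWithin] with δ (hδ : 0 < δ)
      congr 1
      have hss : Ici δ ∩ Ioi (0:ℝ) = Ici δ :=
        inter_eq_self_of_subset_left (fun y hy => lt_of_lt_of_le hδ hy)
      rw [integral_indicator measurableSet_Ici, Measure.restrict_restrict measurableSet_Ici, hss]
      exact (trunc_symm s hs ψ hψc M hM x hδ).symm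
    · exact hTend.const_mul c
  exact hTend2.limUnder_eq

/-- Scaling identity for the fractional Laplacian. -/
lemma fracLap1_scale (s c : ℝ) (hs : s ∈ Set.Ioo (0 : ℝ) 1) (η : ℝ → ℝ)
    (hη : ContDiff ℝ (⊤ : ℕ∞) η) (hηsupp : HasCompactSupport η) (ξ0 ξ ε : ℝ) (hε : 0 < ε) :
    fracLap1 s c (fun z => η ((z - ξ0) / ε)) ξ =
      ε ^ (-(2 * s)) * fracLap1 s c η ((ξ - ξ0) / ε) := by
  obtain ⟨hs0, hs1⟩ := hs
  set p : ℝ := 1 + 2 * s with hp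
  set x' : ℝ := (ξ - ξ0) / ε with hx'
  set ψ : ℝ → ℝ := fun z => η ((z - ξ0) / ε) with hψdef
  have hεne : ε ≠ 0 := hε.ne'
  have hψ : ContDiff ℝ (⊤ : ℕ∞) ψ :=
    hη.comp ((contDiff_id.sub contDiff_const).div_const ε)
  have hψsupp : HasCompactSupport ψ := by
    have e : ℝ ≃ₜ ℝ := (Homeomorph.addRight (-ξ0)).trans
      (Homeomorph.mulRight₀ ε⁻¹ (inv_ne_zero hεne))
    have : ψ = η ∘ ((Homeomorph.addRight (-ξ0)).trans
        (Homeomorph.mulRight₀ ε⁻¹ (inv_ne_zero hεne))) := by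
      funext z
      simp [hψdef, div_eq_mul_inv, sub_eq_add_neg, Homeomorph.trans_apply]
    rw [this]
    exact hηsupp.comp_homeomorph _
  rw [fracLap1_eq s c ⟨hs0, hs1⟩ ψ hψ hψsupp ξ, fracLap1_eq s c ⟨hs0, hs1⟩ η hη hηsupp x']
  -- change of variables
  set W : ℝ → ℝ := fun t => (2 * η x' - η (x' + t) - η (x' - t)) / |ε * t| ^ p with hWdef
  have hψval : ∀ r : ℝ, ψ (ξ + r) = η (x' + r / ε) ∧ ψ (ξ - r) = η (x' - r / ε) := by
    intro r
    constructor <;> · simp only [hψdef, hx']; congr 1; field_simp; ring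
  have hstep1 : (∫ r in Ioi (0:ℝ), (2 * ψ ξ - ψ (ξ + r) - ψ (ξ - r)) / |r| ^ p) =
      ∫ r in Ioi (0:ℝ), W (ε⁻¹ * r) := by
    refine setIntegral_congr_fun measurableSet_Ioi (fun r hr => ?_)
    have h1 : ε * (ε⁻¹ * r) = r := by field_simp
    have hψξ : ψ ξ = η x' := by simp [hψdef, hx']
    rw [hWdef]
    simp only [h1]
    rw [(hψval r).1, (hψval r).2, hψξ]
    congr 2 <;> · congr 1; field_simp
  have hstep2 : (∫ r in Ioi (0:ℝ), W (ε⁻¹ * r)) = ε • ∫ t in Ioi (0:ℝ), W t := by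
    have := integral_comp_mul_left_Ioi W 0 (inv_pos.mpr hε)
    simpa using this
  have hstep3 : (∫ t in Ioi (0:ℝ), W t) =
      ε ^ (-p) * ∫ t in Ioi (0:ℝ), (2 * η x' - η (x' + t) - η (x' - t)) / |t| ^ p := by
    rw [← integral_const_mul]
    refine setIntegral_congr_fun measurableSet_Ioi (fun t ht => ?_)
    have ht0 : (0:ℝ) < t := ht
    rw [hWdef]
    simp only
    rw [abs_mul, abs_of_pos hε, Real.mul_rpow hε.le (abs_nonneg t), Real.rpow_neg hε.le,
      div_eq_mul_inv, mul_inv, ← mul_assoc, mul_comm _ ((ε:ℝ) ^ p)⁻¹, mul_assoc, ← div_eq_mul_inv]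
  rw [hstep1, hstep2, hstep3, smul_eq_mul]
  have hrpow : ε * ε ^ (-p) = ε ^ (-(2*s)) := by
    rw [show ε * ε ^ (-p) = ε ^ (1:ℝ) * ε ^ (-p) by rw [Real.rpow_one], ← Real.rpow_add hε]
    congr 1
    rw [hp]; ring
  set I : ℝ := ∫ t in Ioi (0:ℝ), (2 * η x' - η (x' + t) - η (x' - t)) / |t| ^ p with hI
  calc c * (ε * (ε ^ (-p) * I)) = (ε * ε ^ (-p)) * (c * I) := by ring
    _ = ε ^ (-(2*s)) * (c * I) := by rw [hrpow]
/-- Key estimate in the proof of continuity of the selfsimilar profile across the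
free boundary: with `U(ξ) ≤ C(ξ₀ - ξ)^s` for `ξ ≤ ξ₀`, `U = 0` on `[ξ₀, ∞)` and a
cut-off `η` with `|(-Δ)^s η(z)| ≤ C'(1+|z|)^{-1-2s}`, one has
`|∫_{-∞}^{ξ₀} U(ξ) (-Δ)^s[η((· - ξ₀)/ε)](ξ) dξ| ≤ C'' ε^{1-s}` for `ε ∈ (0,1]`. -/
theorem boundary_cutoff_estimate (s c ξ0 C C' : ℝ) (hs : s ∈ Set.Ioo (0 : ℝ) 1)
    (hc : 0 < c) (hC : 0 < C) (hC' : 0 < C')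
    (U : ℝ → ℝ) (hUmeas : Measurable U) (hUnn : ∀ ξ, 0 ≤ U ξ)
    (hUbd : ∃ M : ℝ, ∀ ξ, U ξ ≤ M)
    (hUzero : ∀ ξ, ξ0 ≤ ξ → U ξ = 0)
    (hUup : ∀ ξ, ξ ≤ ξ0 → U ξ ≤ C * (ξ0 - ξ) ^ s)
    (η : ℝ → ℝ) (hη : ContDiff ℝ (⊤ : ℕ∞) η) (hηsupp : HasCompactSupport η)
    (hηbd : ∀ z : ℝ, |fracLap1 s c η z| ≤ C' * (1 + |z|) ^ (-(1 + 2 * s))) :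
    ∃ C'' : ℝ, 0 < C'' ∧ ∀ ε ∈ Set.Ioc (0 : ℝ) 1,
      |∫ ξ in Set.Iic ξ0, U ξ * fracLap1 s c (fun z => η ((z - ξ0) / ε)) ξ| ≤
        C'' * ε ^ (1 - s) := by
  obtain ⟨hs0, hs1⟩ := hs
  set φ : ℝ → ℝ := fun t => |t| ^ s * (1 + |t|) ^ (-(1 + 2 * s)) with hφ
  have hφnn : ∀ t, 0 ≤ φ t := fun t =>
    mul_nonneg (Real.rpow_nonneg (abs_nonneg t) s) (Real.rpow_nonneg (by positivity) _)
  have hφm : Measurable φ :=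
    (measurable_abs.pow_const s).mul ((measurable_const.add measurable_abs).pow_const _)
  have hφint : Integrable φ := by
    have hint : Integrable (fun t : ℝ => (1 + ‖t‖) ^ (-(1 + s))) :=
      integrable_one_add_norm (by rw [Module.finrank_self]; norm_num; linarith)
    refine hint.mono' hφm.aestronglyMeasurable (Eventually.of_forall fun t => ?_)
    have h1t : (0:ℝ) < 1 + |t| := by positivity
    rw [Real.norm_eq_abs, abs_of_nonneg (hφnn t)]
    calc φ t ≤ (1 + |t|) ^ s * (1 + |t|) ^ (-(1 + 2 * s)) :=
          mul_le_mul_of_nonneg_right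
            (Real.rpow_le_rpow (abs_nonneg t) (by linarith [abs_nonneg t]) hs0.le)
            (Real.rpow_nonneg h1t.le _)
      _ = (1 + |t|) ^ (-(1 + s)) := by rw [← Real.rpow_add h1t]; congr 1; ring
      _ = (1 + ‖t‖) ^ (-(1 + s)) := by rw [Real.norm_eq_abs]
  set Kφ : ℝ := ∫ t, φ t with hKφ
  have hKφ0 : 0 ≤ Kφ := integral_nonneg hφnn
  refine ⟨C * C' * Kφ + 1,
    by have := mul_nonneg (mul_nonneg hC.le hC'.le) hKφ0; linarith, fun ε hε => ?_⟩
  obtain ⟨hε0, hε1⟩ := hε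
  set g : ℝ → ℝ := fun ξ => C * C' * ε ^ (-s) * φ ((ξ - ξ0) / ε) with hg
  have hgnn : ∀ ξ, 0 ≤ g ξ := fun ξ => by
    have := hφnn ((ξ - ξ0) / ε)
    have h1 : (0:ℝ) ≤ ε ^ (-s) := Real.rpow_nonneg hε0.le _
    positivity
  have hcomp : Integrable (fun ξ => φ ((ξ - ξ0) / ε)) :=
    (hφint.comp_div hε0.ne').comp_sub_right ξ0
  have hgint : Integrable g := hcomp.const_mul _
  have hgval : ∫ ξ, g ξ = C * C' * ε ^ (-s) * (ε * Kφ) := by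
    rw [hg]
    simp only
    rw [integral_const_mul]
    congr 1
    have h1 := integral_sub_right_eq_self (μ := volume) (fun u => φ (u / ε)) ξ0
    rw [h1, Measure.integral_comp_div φ ε, smul_eq_mul, abs_of_pos hε0]
  have hbd : ∀ ξ ∈ Iic ξ0, ‖U ξ * fracLap1 s c (fun z => η ((z - ξ0) / ε)) ξ‖ ≤ g ξ := by
    intro ξ hξ
    have hξ' : ξ ≤ ξ0 := hξ
    have hsc := fracLap1_scale s c ⟨hs0, hs1⟩ η hη hηsupp ξ0 ξ ε hε0
    set z : ℝ := (ξ - ξ0) / ε with hz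
    have hznp : z ≤ 0 := div_nonpos_of_nonpos_of_nonneg (by linarith) hε0.le
    have habsz : |z| = (ξ0 - ξ) / ε := by rw [abs_of_nonpos hznp, hz, ← neg_div, neg_sub]
    have hfrac : |fracLap1 s c (fun w => η ((w - ξ0) / ε)) ξ| ≤
        ε ^ (-(2 * s)) * (C' * (1 + |z|) ^ (-(1 + 2 * s))) := by
      rw [hsc, abs_mul, abs_of_nonneg (Real.rpow_nonneg hε0.le _)]
      exact mul_le_mul_of_nonneg_left (hηbd z) (Real.rpow_nonneg hε0.le _)
    have hU : U ξ ≤ C * (ε ^ s * |z| ^ s) := by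
      have h1 : ξ0 - ξ = ε * |z| := by rw [habsz]; field_simp
      have h2 := hUup ξ hξ'
      rwa [h1, Real.mul_rpow hε0.le (abs_nonneg z)] at h2
    rw [Real.norm_eq_abs, abs_mul, abs_of_nonneg (hUnn ξ)]
    have hεs : ε ^ s * ε ^ (-(2 * s)) = ε ^ (-s) := by
      rw [← Real.rpow_add hε0]; congr 1; ring
    calc U ξ * |fracLap1 s c (fun w => η ((w - ξ0) / ε)) ξ|
        ≤ (C * (ε ^ s * |z| ^ s)) * (ε ^ (-(2 * s)) * (C' * (1 + |z|) ^ (-(1 + 2 * s)))) := by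
          apply mul_le_mul hU hfrac (abs_nonneg _)
          have : (0:ℝ) ≤ |z| ^ s := Real.rpow_nonneg (abs_nonneg z) s
          positivity
      _ = C * C' * (ε ^ s * ε ^ (-(2 * s))) * φ z := by rw [hφ]; ring
      _ = g ξ := by rw [hεs, hg]
  have hre : ε * ε ^ (-s) = ε ^ (1 - s) := by
    rw [show (1:ℝ) - s = 1 + (-s) by ring, Real.rpow_add hε0, Real.rpow_one]
  calc |∫ ξ in Set.Iic ξ0, U ξ * fracLap1 s c (fun w => η ((w - ξ0) / ε)) ξ|
      ≤ ∫ ξ in Set.Iic ξ0, g ξ := by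
        have := norm_integral_le_of_norm_le hgint.integrableOn
          ((ae_restrict_iff' measurableSet_Iic).2 (Eventually.of_forall hbd))
        simpa [Real.norm_eq_abs] using this
    _ ≤ ∫ ξ, g ξ := setIntegral_le_integral hgint (Eventually.of_forall hgnn)
    _ = C * C' * Kφ * (ε * ε ^ (-s)) := by rw [hgval]; ring
    _ = C * C' * Kφ * ε ^ (1 - s) := by rw [hre]
    _ ≤ (C * C' * Kφ + 1) * ε ^ (1 - s) :=
        mul_le_mul_of_nonneg_right (by linarith) (Real.rpow_nonneg hε0.le _)
end
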